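/- arXiv:2106.01509 — 2 statements merged into one kernel-verified Lean document; each statement's English description precedes it below -/
import Mathlib

section
/- Let d ≥ 2. The set S = {g ∈ ℂ^d : ‖g‖ = 1 and ⟨g, M^k T^ℓ g⟩ ≠ 0 for all (k,ℓ) ∈ (ℤ/dℤ)²} is nonempty, and S is open and dense in the unit sphere of ℂ^d (with its subspace topology). Equivalently, the set of unit vectors g with rank(G(g)) = d² is open dense in the unit sphere. -/
open Complex Finset

noncomputable section

/-- `gw d` is the primitive `d`-th root of unity `ω = exp(2πi/d)`. -/
def gw (d : ℕ) : ℂ := Complex.exp (2 * Real.pi * Complex.I / d)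

/-- `modT d k l g = M^k T^ℓ g`, where `(Mg)_n = ω^n g_n` and `(Tg)_n = g_{n-1}`. -/
def modT (d : ℕ) (k l : ZMod d) (g : ZMod d → ℂ) : ZMod d → ℂ :=
  fun n => gw d ^ (k.val * n.val) * g (n - l)

/-- `inn d x y = ⟨x,y⟩ = Σ_n x_n conj(y_n)`. -/
def inn (d : ℕ) [NeZero d] (x y : ZMod d → ℂ) : ℂ :=
  ∑ n : ZMod d, x n * (starRingEnd ℂ) (y n)

/-- The `d² × d²` Gram matrix `G(g)` with entries `|⟨M^k T^ℓ g, M^{k'} T^{ℓ'} g⟩|²`. -/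
def Gmat (d : ℕ) [NeZero d] (g : ZMod d → ℂ) :
    Matrix (ZMod d × ZMod d) (ZMod d × ZMod d) ℂ :=
  fun p q =>
    ((‖inn d (modT d p.1 p.2 g) (modT d q.1 q.2 g)‖ ^ 2 : ℝ) : ℂ)

/-!
`⟨g, M^k T^ℓ g⟩` is the ambiguity function `A_g(k, ℓ)`: the discrete Fourier transform in `n` of
`g n * conj (g (n - ℓ))`. The Gram matrix `G(g)` is the convolution matrix of `|A_g|²` on
`(ℤ/d)²`, so it is diagonalised by the characters of `(ℤ/d)²`; by Moyal's identity (the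
Wiener–Khinchin theorem applied once in each variable) its eigenvalues are `d · |A_g|²` at the
rotated points `(s₂, -s₁)`. Hence `rank G(g) = d²` exactly when `A_g` has no zero.

Each `g ↦ A_g(k, ℓ)` is real-analytic and not identically zero (a complex operator whose
quadratic form vanishes is zero, and `M^k T^ℓ ≠ 0`), and its zero set is a cone. A zero set
containing a relatively open piece of the sphere would then contain an open cone, forcing
`A_g(k, ℓ) ≡ 0`. So each non-vanishing set is open and dense in the sphere, and so is their
finite intersection.
-/

open scoped ZMod ComplexConjugate Kronecker

namespace Matrix

theorem of_sub_mul_eq_mul_diagonal {G ι R : Type*} [AddCommGroup G] [Fintype G] [Fintype ι]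
    [DecidableEq ι] [CommSemiring R] (c : G → R) (P : Matrix G ι R)
    (hP : ∀ r p s, P (r + p) s = P r s * P p s) :
    of (fun p q => c (q - p)) * P = P * diagonal (fun s => ∑ r, c r * P r s) := by
  ext p s
  rw [mul_apply, mul_diagonal, Finset.mul_sum]
  refine (Fintype.sum_equiv (Equiv.addRight p) _ _ fun r => ?_).symm
  simp only [Equiv.coe_addRight, of_apply, add_sub_cancel_right, hP]
  ring

theorem rank_eq_card_of_mul_eq_mul_diagonal {n R : Type*} [Fintype n] [DecidableEq n] [Field R]
    [DecidableEq R] {C P : Matrix n n R} {w : n → R} (hP : IsUnit P.det)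
    (h : C * P = P * diagonal w) : C.rank = Fintype.card {i // w i ≠ 0} := by
  rw [← rank_mul_eq_left_of_isUnit_det P C hP, h, rank_mul_eq_right_of_isUnit_det P _ hP,
    rank_diagonal]

end Matrix

namespace ZMod

variable {N : ℕ} [NeZero N]

def lagMul (g : ZMod N → ℂ) (l : ZMod N) : ZMod N → ℂ := fun n => g n * conj (g (n - l))

def autocorr (h : ZMod N → ℂ) : ZMod N → ℂ := fun l => ∑ n, lagMul h l n

theorem dft_autocorr (h : ZMod N → ℂ) (k : ZMod N) :
    𝓕 (autocorr h) k = 𝓕 h k * conj (𝓕 h k) := by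
  simp only [dft_apply, autocorr, lagMul, smul_eq_mul, map_sum, map_mul, Finset.mul_sum,
    Finset.sum_mul, ← AddChar.map_neg_eq_conj, neg_neg]
  rw [Finset.sum_comm]
  conv_rhs => rw [Finset.sum_comm]
  refine Finset.sum_congr rfl fun n _ => Fintype.sum_equiv (Equiv.subLeft n) _ _ fun l => ?_
  rw [Equiv.subLeft_apply, show -(l * k) = -(n * k) + (n - l) * k by ring,
    AddChar.map_add_eq_mul]
  ring

theorem autocorr_lagMul_comm (g : ZMod N → ℂ) (l a : ZMod N) :
    autocorr (lagMul g l) a = autocorr (lagMul g a) l := by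
  refine Finset.sum_congr rfl fun n _ => ?_
  simp only [lagMul, map_mul, Complex.conj_conj, sub_right_comm n a l]
  ring

def ambiguity (g : ZMod N → ℂ) (k l : ZMod N) : ℂ := 𝓕 (lagMul g l) k

theorem normSq_ambiguity_eq_dft_autocorr (g : ZMod N → ℂ) (k l : ZMod N) :
    ((‖ambiguity g k l‖ ^ 2 : ℝ) : ℂ) = 𝓕 (autocorr (lagMul g l)) k := by
  rw [dft_autocorr, Complex.mul_conj', ambiguity, Complex.ofReal_pow]

theorem sum_normSq_ambiguity_mul_stdAddChar (g : ZMod N → ℂ) (s : ZMod N × ZMod N) :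
    ∑ r : ZMod N × ZMod N, ((‖ambiguity g r.1 r.2‖ ^ 2 : ℝ) : ℂ) *
        (stdAddChar (-(r.1 * s.1)) * stdAddChar (-(r.2 * s.2)))
      = N * ((‖ambiguity g s.2 (-s.1)‖ ^ 2 : ℝ) : ℂ) := by
  calc _ = ∑ l, stdAddChar (-(l * s.2)) * 𝓕 (fun k => ((‖ambiguity g k l‖ ^ 2 : ℝ) : ℂ)) s.1 := by
        rw [Fintype.sum_prod_type, Finset.sum_comm]
        simp only [dft_apply, smul_eq_mul, Finset.mul_sum]
        exact Finset.sum_congr rfl fun l _ => Finset.sum_congr rfl fun k _ => by ring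
    _ = ∑ l, stdAddChar (-(l * s.2)) * (N * autocorr (lagMul g (-s.1)) l) := by
        simp only [normSq_ambiguity_eq_dft_autocorr, dft_dft, autocorr_lagMul_comm g _ (-s.1),
          smul_eq_mul]
    _ = N * ((‖ambiguity g s.2 (-s.1)‖ ^ 2 : ℝ) : ℂ) := by
        rw [normSq_ambiguity_eq_dft_autocorr, dft_apply, Finset.mul_sum]
        exact Finset.sum_congr rfl fun l _ => by rw [smul_eq_mul]; ring

theorem toMatrix'_dft_apply (i j : ZMod N) :
    LinearMap.toMatrix' (𝓕 : (ZMod N → ℂ) ≃ₗ[ℂ] _).toLinearMap i j = stdAddChar (-(i * j)) := by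
  rw [LinearMap.toMatrix'_apply, LinearEquiv.coe_coe, dft_apply,
    Finset.sum_eq_single j (fun m _ hm => by simp [hm]) (by simp)]
  simp [mul_comm]

theorem isUnit_det_toMatrix'_dft :
    IsUnit (LinearMap.toMatrix' (𝓕 : (ZMod N → ℂ) ≃ₗ[ℂ] _).toLinearMap).det := by
  rw [LinearMap.det_toMatrix']
  exact LinearEquiv.isUnit_det' _

theorem rank_of_normSq_ambiguity (g : ZMod N → ℂ) :
    (Matrix.of fun p q : ZMod N × ZMod N => ((‖ambiguity g (q - p).1 (q - p).2‖ ^ 2 : ℝ) : ℂ)).rank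
      = Fintype.card {s : ZMod N × ZMod N // ambiguity g s.2 (-s.1) ≠ 0} := by
  set F := LinearMap.toMatrix' (𝓕 : (ZMod N → ℂ) ≃ₗ[ℂ] _).toLinearMap
  have hP : IsUnit (F ⊗ₖ F).det := by
    rw [Matrix.det_kronecker]
    exact (isUnit_det_toMatrix'_dft.pow _).mul (isUnit_det_toMatrix'_dft.pow _)
  have hchar (r p s : ZMod N × ZMod N) : (F ⊗ₖ F) (r + p) s = (F ⊗ₖ F) r s * (F ⊗ₖ F) p s := by
    simp only [Matrix.kroneckerMap_apply, F, toMatrix'_dft_apply, Prod.fst_add, Prod.snd_add,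
      add_mul, neg_add_rev, AddChar.map_add_eq_mul]
    ring
  rw [Matrix.rank_eq_card_of_mul_eq_mul_diagonal hP
    (Matrix.of_sub_mul_eq_mul_diagonal (fun r => ((‖ambiguity g r.1 r.2‖ ^ 2 : ℝ) : ℂ)) _ hchar)]
  refine Fintype.card_congr (Equiv.subtypeEquivRight fun s => ?_)
  simp only [Matrix.kroneckerMap_apply, F, toMatrix'_dft_apply,
    sum_normSq_ambiguity_mul_stdAddChar]
  simp [NeZero.ne]

end ZMod

theorem dense_iInter_of_isOpen_of_finite {X ι : Type*} [TopologicalSpace X] [Finite ι]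
    {f : ι → Set X} (ho : ∀ i, IsOpen (f i)) (hd : ∀ i, Dense (f i)) : Dense (⋂ i, f i) := by
  rw [← Set.sInter_range]
  exact (Set.finite_range f).dense_sInter (Set.forall_mem_range.2 ho) (Set.forall_mem_range.2 hd)

theorem dense_sphere_setOf_ne_zero {E F : Type*} [NormedAddCommGroup E] [NormedSpace ℝ E]
    [NormedAddCommGroup F] [NormedSpace ℝ F] {f : E → F} (hf : AnalyticOnNhd ℝ f Set.univ)
    (hzero_smul : ∀ x, f x = 0 → ∀ t : ℝ, 0 < t → f (t • x) = 0) (hne : ∃ x, f x ≠ 0) :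
    Dense {x : Metric.sphere (0 : E) 1 | f x ≠ 0} := by
  rw [dense_iff_inter_open]
  rintro _ ⟨W, hW, rfl⟩ ⟨x₀, hx₀⟩
  by_contra hempty
  have hvanish : ∀ x : Metric.sphere (0 : E) 1, (x : E) ∈ W → f x = 0 := fun x hx =>
    not_not.mp fun hfx => hempty ⟨x, hx, hfx⟩
  set cone : Set E := {y | y ≠ 0} ∩ (fun y => ‖y‖⁻¹ • y) ⁻¹' W
  have hcone_open : IsOpen cone :=
    (continuousOn_id.norm.inv₀ fun _ => norm_ne_zero_iff.mpr).smul continuousOn_id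
      |>.isOpen_inter_preimage isOpen_ne hW
  have hf_cone : ∀ y ∈ cone, f y = 0 := by
    rintro y ⟨hy, hyW⟩
    have hy' : 0 < ‖y‖ := norm_pos_iff.mpr hy
    have hunit : ‖y‖⁻¹ • y ∈ Metric.sphere (0 : E) 1 := by
      rw [mem_sphere_zero_iff_norm, norm_smul, norm_inv, norm_norm, inv_mul_cancel₀ hy'.ne']
    simpa [smul_smul, mul_inv_cancel₀ hy'.ne'] using hzero_smul _ (hvanish ⟨_, hunit⟩ hyW) ‖y‖ hy'
  have hx₀_cone : (x₀ : E) ∈ cone := by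
    refine ⟨ne_zero_of_mem_unit_sphere x₀, ?_⟩
    simpa [norm_eq_of_mem_sphere x₀] using hx₀
  obtain ⟨x, hx⟩ := hne
  exact hx <| hf.eqOn_zero_of_preconnected_of_eventuallyEq_zero isPreconnected_univ
    (Set.mem_univ (x₀ : E)) (Filter.eventuallyEq_of_mem (hcone_open.mem_nhds hx₀_cone) hf_cone)
    (Set.mem_univ x)

def EuclideanSpace.unitSphereHomeomorph (𝕜 ι : Type*) [RCLike 𝕜] [Fintype ι] :
    {g : ι → 𝕜 // ∑ i, ‖g i‖ ^ 2 = 1} ≃ₜ Metric.sphere (0 : EuclideanSpace 𝕜 ι) 1 :=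
  (PiLp.homeomorph 2 fun _ : ι => 𝕜).symm.subtype fun g => by
    simp [EuclideanSpace.norm_eq, Real.sqrt_eq_one]
    rfl

section

open ZMod

variable {d : ℕ} [NeZero d]

theorem modT_apply (k l : ZMod d) (g : ZMod d → ℂ) (n : ZMod d) :
    modT d k l g n = stdAddChar (k * n) * g (n - l) := by
  have hkn : k * n = ((k.val * n.val : ℕ) : ZMod d) := by push_cast [natCast_val, cast_id']; rfl
  rw [modT, gw, hkn, stdAddChar_apply, toCircle_natCast, ← Complex.exp_nat_mul]
  congr 2
  ring

theorem inn_modT_eq_ambiguity (g : ZMod d → ℂ) (k l : ZMod d) :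
    inn d g (modT d k l g) = ambiguity g k l := by
  simp only [inn, modT_apply, ambiguity, dft_apply, lagMul, map_mul, smul_eq_mul,
    ← AddChar.map_neg_eq_conj, mul_comm k]
  exact Finset.sum_congr rfl fun n _ => by ring

theorem norm_inn_modT_modT (g : ZMod d → ℂ) (k l k' l' : ZMod d) :
    ‖inn d (modT d k l g) (modT d k' l' g)‖ = ‖ambiguity g (k' - k) (l' - l)‖ := by
  have : inn d (modT d k l g) (modT d k' l' g)
      = stdAddChar ((k - k') * l) * inn d g (modT d (k' - k) (l' - l) g) := by
    simp only [inn, modT_apply, map_mul, ← AddChar.map_neg_eq_conj, Finset.mul_sum]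
    refine Fintype.sum_equiv (Equiv.subRight l) _ _ fun n => ?_
    have hchar : stdAddChar (k * n) * stdAddChar (-(k' * n))
        = stdAddChar ((k - k') * l) * stdAddChar (-((k' - k) * (n - l))) := by
      rw [← AddChar.map_add_eq_mul, ← AddChar.map_add_eq_mul]
      ring_nf
    rw [Equiv.subRight_apply, sub_sub_sub_cancel_right]
    linear_combination g (n - l) * conj (g (n - l')) * hchar
  rw [this, norm_mul, AddChar.norm_apply, one_mul, inn_modT_eq_ambiguity]

theorem Gmat_eq_of_normSq_ambiguity (g : ZMod d → ℂ) :
    Gmat d g = Matrix.of fun p q => ((‖ambiguity g (q - p).1 (q - p).2‖ ^ 2 : ℝ) : ℂ) := by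
  ext p q
  rw [Gmat, norm_inn_modT_modT, Matrix.of_apply, Prod.fst_sub, Prod.snd_sub]

theorem rank_Gmat_eq_sq_iff (g : ZMod d → ℂ) :
    (Gmat d g).rank = d ^ 2 ↔ ∀ k l : ZMod d, ambiguity g k l ≠ 0 := by
  have hcard : Fintype.card (ZMod d × ZMod d) = d ^ 2 := by simp [sq]
  rw [Gmat_eq_of_normSq_ambiguity, rank_of_normSq_ambiguity, ← hcard, Fintype.card_subtype,
    Finset.card_eq_iff_eq_univ, Finset.filter_eq_self]
  exact ⟨fun h k l => by simpa using h (-l, k) (Finset.mem_univ _), fun h s _ => h _ _⟩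

theorem inn_modT_smul (t : ℝ) (g : ZMod d → ℂ) (k l : ZMod d) :
    inn d (t • g) (modT d k l (t • g)) = t ^ 2 * inn d g (modT d k l g) := by
  simp only [inn, modT_apply, Pi.smul_apply, Complex.real_smul, map_mul, Complex.conj_ofReal,
    Finset.mul_sum]
  exact Finset.sum_congr rfl fun n _ => by ring

theorem analyticOnNhd_inn_modT (k l : ZMod d) :
    AnalyticOnNhd ℝ (fun g : ZMod d → ℂ => inn d g (modT d k l g)) Set.univ := by
  have hproj (n : ZMod d) : AnalyticOnNhd ℝ (fun g : ZMod d → ℂ => g n) Set.univ :=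
    (ContinuousLinearMap.proj (R := ℝ) (φ := fun _ : ZMod d => ℂ) n).analyticOnNhd _
  have hconj (n : ZMod d) : AnalyticOnNhd ℝ (fun g : ZMod d → ℂ => conj (g n)) Set.univ :=
    (Complex.conjCLE.toContinuousLinearMap.comp
      (ContinuousLinearMap.proj (R := ℝ) (φ := fun _ : ZMod d => ℂ) n)).analyticOnNhd _
  simp only [inn, modT_apply, map_mul]
  exact Finset.analyticOnNhd_fun_sum _ fun n _ => (hproj n).mul (analyticOnNhd_const.mul (hconj _))

def modTLinearMap (k l : ZMod d) : EuclideanSpace ℂ (ZMod d) →ₗ[ℂ] EuclideanSpace ℂ (ZMod d) where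
  toFun x := WithLp.toLp 2 (modT d k l x.ofLp)
  map_add' x y := by ext n; simp [modT_apply, mul_add]
  map_smul' c x := by ext n; simp [modT_apply]; ring

theorem inner_modTLinearMap (k l : ZMod d) (x : EuclideanSpace ℂ (ZMod d)) :
    inner ℂ (modTLinearMap k l x) x = inn d x.ofLp (modT d k l x.ofLp) := by
  simp only [PiLp.inner_apply, RCLike.inner_apply, inn, modTLinearMap, LinearMap.coe_mk,
    AddHom.coe_mk]

theorem exists_inn_modT_ne_zero (k l : ZMod d) :
    ∃ g : ZMod d → ℂ, inn d g (modT d k l g) ≠ 0 := by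
  by_contra! h
  have hT : modTLinearMap k l = 0 :=
    (inner_map_self_eq_zero _).mp fun x => by rw [inner_modTLinearMap]; exact h _
  have := congrArg (fun T => (T (WithLp.toLp 2 (Pi.single 0 1))).ofLp l) hT
  simp [modTLinearMap, modT_apply, stdAddChar_apply] at this

theorem dense_sphere_setOf_inn_modT_ne_zero (k l : ZMod d) :
    Dense {x : Metric.sphere (0 : EuclideanSpace ℂ (ZMod d)) 1 |
      inn d x.1.ofLp (modT d k l x.1.ofLp) ≠ 0} := by
  refine dense_sphere_setOf_ne_zero ((analyticOnNhd_inn_modT k l).comp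
    ((PiLp.continuousLinearEquiv 2 ℝ fun _ : ZMod d => ℂ).toContinuousLinearMap.analyticOnNhd _)
    (Set.mapsTo_univ _ _)) (fun x hx t _ => ?_) ?_
  · simp only [Function.comp_apply, _root_.map_smul, inn_modT_smul] at hx ⊢
    rw [hx, mul_zero]
  · obtain ⟨g, hg⟩ := exists_inn_modT_ne_zero (d := d) k l
    exact ⟨WithLp.toLp 2 g, hg⟩

theorem isOpen_setOf_inn_modT_ne_zero (k l : ZMod d) :
    IsOpen {g : {g : ZMod d → ℂ // ∑ n, ‖g n‖ ^ 2 = 1} | inn d g.1 (modT d k l g.1) ≠ 0} :=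
  isOpen_ne_fun ((continuousOn_univ.mp (analyticOnNhd_inn_modT k l).continuousOn).comp
    continuous_subtype_val) continuous_const

theorem dense_setOf_inn_modT_ne_zero (k l : ZMod d) :
    Dense {g : {g : ZMod d → ℂ // ∑ n, ‖g n‖ ^ 2 = 1} | inn d g.1 (modT d k l g.1) ≠ 0} := by
  convert (dense_sphere_setOf_inn_modT_ne_zero k l).preimage
    (EuclideanSpace.unitSphereHomeomorph ℂ (ZMod d)).isOpenMap using 1
  ext g
  exact Iff.rfl

end

theorem stmt3_general (d : ℕ) [NeZero d] :
    ∀ S : Set {g : ZMod d → ℂ // ∑ n : ZMod d, ‖g n‖ ^ 2 = 1},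
      (S = {g | ∀ k l : ZMod d, inn d g.1 (modT d k l g.1) ≠ 0}) →
      (S.Nonempty ∧ IsOpen S ∧ Dense S ∧
        S = {g | (Gmat d g.1).rank = d ^ 2}) := by
  intro S hS
  have hopen (k : ZMod d) := isOpen_iInter_of_finite (isOpen_setOf_inn_modT_ne_zero k)
  have hdense : Dense S := by
    simp only [hS, Set.ofPred_forall]
    exact dense_iInter_of_isOpen_of_finite hopen fun k => dense_iInter_of_isOpen_of_finite
      (isOpen_setOf_inn_modT_ne_zero k) (dense_setOf_inn_modT_ne_zero k)
  have : Nonempty {g : ZMod d → ℂ // ∑ n : ZMod d, ‖g n‖ ^ 2 = 1} :=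
    ⟨(EuclideanSpace.unitSphereHomeomorph ℂ (ZMod d)).symm
      ⟨_, (NormedSpace.sphere_nonempty.mpr zero_le_one).some_mem⟩⟩
  refine ⟨hdense.nonempty, ?_, hdense, ?_⟩
  · simp only [hS, Set.ofPred_forall]
    exact isOpen_iInter_of_finite hopen
  · rw [hS]
    ext g
    simp only [Set.mem_ofPred_eq, rank_Gmat_eq_sq_iff, inn_modT_eq_ambiguity]

/-- for `d ≥ 2` the set of unit vectors `g` with
`⟨g, M^k T^ℓ g⟩ ≠ 0` for all `(k,ℓ)` is nonempty, open and dense in the unit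
sphere of `ℂ^d` (with its subspace topology), and it coincides with the set of
unit vectors with `rank G(g) = d²`. -/
theorem stmt3 (d : ℕ) [NeZero d] (hd : 2 ≤ d) :
    ∀ S : Set {g : ZMod d → ℂ // ∑ n : ZMod d, ‖g n‖ ^ 2 = 1},
      (S = {g | ∀ k l : ZMod d, inn d g.1 (modT d k l g.1) ≠ 0}) →
      (S.Nonempty ∧ IsOpen S ∧ Dense S ∧
        S = {g | (Gmat d g.1).rank = d ^ 2}) :=
  stmt3_general d
end
end

section
/- Let d be an odd positive integer and g ∈ ℂ^d a unit vector. Then rank(G(g)) is an odd number. -/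
/-!
The Gram matrix is circulant on the group `ZMod d × ZMod d`: `G(g)_{p,q} = c(q - p)` with
`c(v) = |⟨g, M^{v₁} T^{v₂} g⟩|²`, because time-frequency shifts compose up to a phase. The characters of a
finite abelian group diagonalize every circulant matrix, so the rank is the number of characters `ψ`
with `ĉ(ψ) ≠ 0`. As `c` is real, `ĉ(ψ⁻¹)` is the conjugate of `ĉ(ψ)`, so these characters come in
pairs `{ψ, ψ⁻¹}`, except for `ψ = 1`, which is the only self-inverse character because the
character group has odd order `d²`; and `ĉ(1) = ∑ c ≥ c(0) = 1`.
-/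

open Complex Finset

noncomputable section

section OddOrder

variable {G : Type*} [Group G] [Fintype G]

theorem eq_one_of_inv_eq_self_of_odd_card (hG : Odd (Fintype.card G)) {x : G} (hx : x⁻¹ = x) :
    x = 1 := by
  have hsq : x ^ 2 = 1 := by rw [sq, ← inv_mul_cancel x, hx]
  have h2 : orderOf x ∣ 2 := orderOf_dvd_of_pow_eq_one hsq
  have hodd : Odd (orderOf x) := hG.of_dvd_nat orderOf_dvd_card
  rcases (Nat.dvd_prime Nat.prime_two).mp h2 with h | h
  · exact orderOf_eq_one_iff.mp h
  · exact absurd (h ▸ hodd) (by decide)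

theorem odd_card_subtype_of_inv_mem (hG : Odd (Fintype.card G)) (p : G → Prop)
    [DecidablePred p] (hp : ∀ x, p x → p x⁻¹) (h1 : p 1) : Odd (Fintype.card {x // p x}) := by
  classical
  let f : Function.End {x // p x} := fun x => ⟨x.1⁻¹, hp _ x.2⟩
  have hf : f ^ 2 ^ 1 = 1 := by
    funext x
    exact Subtype.ext (inv_inv x.1)
  have hfix : f.fixedPoints = {⟨1, h1⟩} := by
    ext x
    simp only [Set.mem_singleton_iff, Subtype.ext_iff]
    exact ⟨fun hx => eq_one_of_inv_eq_self_of_odd_card hG (congrArg Subtype.val hx),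
      fun hx => Subtype.ext (by simp [f, hx])⟩
  have := Equiv.Perm.card_fixedPoints_modEq (p := 2) hf
  simp only [hfix, Set.card_singleton] at this
  exact Nat.odd_iff.mpr this

end OddOrder

namespace Matrix

variable {α : Type*} [AddCommGroup α] [Fintype α]

theorem circulant_mulVec_addChar (v : α → ℂ) (ψ : AddChar α ℂ) :
    circulant v *ᵥ ⇑ψ = (∑ u, v u * ψ (-u)) • ⇑ψ := by
  ext i
  simp only [mulVec, dotProduct, circulant_apply, Pi.smul_apply, smul_eq_mul, Finset.sum_mul]
  refine Fintype.sum_equiv (Equiv.subLeft i) _ _ fun j => ?_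
  rw [Equiv.subLeft_apply, mul_assoc, ← AddChar.map_add_eq_mul, neg_sub, sub_add_cancel]

theorem rank_circulant (v : α → ℂ) :
    (circulant v).rank = Fintype.card {ψ : AddChar α ℂ // ∑ u, v u * ψ (-u) ≠ 0} := by
  classical
  let b := AddChar.complexBasis α
  have hdiag : (circulant v).mulVecLin = toLin b b (diagonal fun ψ => ∑ u, v u * ψ (-u)) :=
    b.ext fun ψ => by
      rw [toLin_self, mulVecLin_apply, AddChar.complexBasis_apply, circulant_mulVec_addChar]
      simp [b, diagonal_apply, ite_smul, AddChar.complexBasis_apply]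
  rw [rank_eq_finrank_range_toLin _ (Pi.basisFun ℂ α) (Pi.basisFun ℂ α), toLin_eq_toLin',
    toLin'_apply', hdiag, ← rank_eq_finrank_range_toLin, rank_diagonal]

theorem odd_rank_circulant_ofReal (hα : Odd (Fintype.card α)) (v : α → ℝ) (hv : ∑ u, v u ≠ 0) :
    Odd (circulant fun u => (v u : ℂ)).rank := by
  classical
  rw [rank_circulant]
  refine odd_card_subtype_of_inv_mem (by rwa [AddChar.card_eq]) _ (fun ψ hψ => ?_) ?_
  · have hconj : ∑ u, (v u : ℂ) * ψ⁻¹ (-u) = starRingEnd ℂ (∑ u, (v u : ℂ) * ψ (-u)) := by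
      simp only [map_sum, map_mul, conj_ofReal, AddChar.inv_apply, neg_neg,
        ← AddChar.map_neg_eq_conj]
    rwa [hconj, map_ne_zero]
  · simpa only [AddChar.one_apply, mul_one] using mod_cast hv

end Matrix

section TimeFrequency

theorem modT_zero_zero (d : ℕ) (g : ZMod d → ℂ) : modT d 0 0 g = g := by
  funext n
  simp [modT]

variable (d : ℕ) [NeZero d]

theorem gw_pow_val_mul (k n : ZMod d) : gw d ^ (k.val * n.val) = ZMod.stdAddChar (k * n) := by
  have h := ZMod.stdAddChar_coe (N := d) ((k.val * n.val : ℕ) : ℤ)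
  rw [Int.cast_natCast, Nat.cast_mul, ZMod.natCast_zmod_val, ZMod.natCast_zmod_val] at h
  rw [h, gw, ← Complex.exp_nat_mul]
  congr 1
  push_cast
  ring

theorem inn_self (g : ZMod d → ℂ) : inn d g g = ((∑ n, ‖g n‖ ^ 2 : ℝ) : ℂ) := by
  simp only [inn, Complex.mul_conj, Complex.sq_norm, Complex.ofReal_sum]

theorem inn_modT_modT (g : ZMod d → ℂ) (k l k' l' : ZMod d) :
    inn d (modT d k l g) (modT d k' l' g)
      = ZMod.stdAddChar ((k - k') * l) * inn d g (modT d (k' - k) (l' - l) g) := by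
  simp only [inn, modT, gw_pow_val_mul, map_mul, ← AddChar.map_neg_eq_conj, Finset.mul_sum]
  refine Fintype.sum_equiv (Equiv.subRight l) _ _ fun n => ?_
  rw [Equiv.subRight_apply, show n - l - (l' - l) = n - l' by abel]
  have hphase : ZMod.stdAddChar (k * n) * ZMod.stdAddChar (-(k' * n))
      = ZMod.stdAddChar ((k - k') * l) * ZMod.stdAddChar (-((k' - k) * (n - l))) := by
    rw [← AddChar.map_add_eq_mul, ← AddChar.map_add_eq_mul]
    ring_nf
  linear_combination g (n - l) * starRingEnd ℂ (g (n - l')) * hphase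

theorem Gmat_eq_circulant (g : ZMod d → ℂ) :
    Gmat d g = Matrix.circulant fun u => ((‖inn d g (modT d (-u).1 (-u).2 g)‖ ^ 2 : ℝ) : ℂ) := by
  ext p q
  rw [Gmat, Matrix.circulant_apply, inn_modT_modT, norm_mul, AddChar.norm_apply, one_mul,
    neg_sub, Prod.fst_sub, Prod.snd_sub]

end TimeFrequency

theorem stmt6_general (d : ℕ) [NeZero d] (hodd : Odd d) (g : ZMod d → ℂ)
    (hg : ∑ n : ZMod d, ‖g n‖ ^ 2 = 1) :
    Odd (Gmat d g).rank := by
  set c : ZMod d × ZMod d → ℝ := fun u => ‖inn d g (modT d u.1 u.2 g)‖ ^ 2 with hc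
  have hc0 : c 0 = 1 := by
    simp [hc, modT_zero_zero, inn_self, hg]
  have hsum : ∑ u, c (-u) ≠ 0 := by
    rw [show ∑ u, c (-u) = ∑ u, c u from Equiv.sum_comp (Equiv.neg _) c]
    have hc0_le := single_le_sum (fun u _ => sq_nonneg _) (mem_univ 0) (f := c)
    linarith
  rw [Gmat_eq_circulant]
  exact Matrix.odd_rank_circulant_ofReal (by simpa [ZMod.card] using hodd.mul hodd) _ hsum

/-- if `d` is odd then `rank G(g)` is odd. -/
theorem stmt6 (d : ℕ) [NeZero d] (hd : 1 ≤ d) (hodd : Odd d) (g : ZMod d → ℂ)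
    (hg : ∑ n : ZMod d, ‖g n‖ ^ 2 = 1) :
    Odd (Gmat d g).rank :=
  stmt6_general d hodd g hg
end
end
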